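/- arXiv:2004.05979 — 2 statements merged into one kernel-verified Lean document; each statement's English description precedes it below -/
import Mathlib

section
/- Let γ ∈ (0,1] and σ ≥ 0. There exists a constant C > 0 such that for all real x ≥ y ≥ 0, e^{⟨x⟩^γ}⟨x⟩^σ − e^{⟨y⟩^γ}⟨y⟩^σ ≤ C · (x−y)/(⟨x⟩^{1−γ} + ⟨y⟩^{1−γ}) · e^{⟨x⟩^γ}⟨x⟩^σ, where ⟨x⟩ = sqrt(1+x²). -/
/-!
Put `X = ⟨x⟩`, `Y = ⟨y⟩`, so that `1 ≤ Y ≤ X` and `X - Y ≤ x - y`, and write the weight as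
`exp φ` with `φ t = t ^ γ + σ log t`.
If `X ≤ 2Y`, then `exp φ(X) - exp φ(Y) ≤ (φ X - φ Y) exp φ(X)`, concavity gives
`φ X - φ Y ≤ (γ + σ) (X - Y) / Y ^ (1 - γ)`, and `X ^ (1 - γ) + Y ^ (1 - γ) ≤ 3 Y ^ (1 - γ)`.
If `X > 2Y`, then `X - Y > X / 2 ≥ (X ^ (1 - γ) + Y ^ (1 - γ)) / 4`, so the right-hand side is
at least `C / 4` times the weight at `x`, which dominates the left-hand side.
-/

/-- Japanese bracket of a real number. -/
noncomputable def jb (x : ℝ) : ℝ := Real.sqrt (1 + x ^ 2)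

open Real

lemma one_le_jb (x : ℝ) : 1 ≤ jb x :=
  Real.one_le_sqrt.2 (by nlinarith [sq_nonneg x])

lemma sq_jb (x : ℝ) : jb x ^ 2 = 1 + x ^ 2 :=
  Real.sq_sqrt (by positivity)

lemma jb_le_jb {x y : ℝ} (hy : 0 ≤ y) (hyx : y ≤ x) : jb y ≤ jb x :=
  Real.sqrt_le_sqrt (by nlinarith)

lemma le_jb (x : ℝ) : x ≤ jb x :=
  Real.le_sqrt_of_sq_le (by linarith)

lemma jb_sub_jb_le {x y : ℝ} (hy : 0 ≤ y) (hyx : y ≤ x) : jb x - jb y ≤ x - y := by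
  have hfactor : (jb x - jb y) * (jb x + jb y) = (x - y) * (x + y) := by
    nlinarith [sq_jb x, sq_jb y]
  nlinarith [le_jb x, le_jb y, jb_le_jb hy hyx, one_le_jb y]

lemma exp_sub_exp_le_mul_exp (a b : ℝ) : exp a - exp b ≤ (a - b) * exp a := by
  have h := mul_le_mul_of_nonneg_right (add_one_le_exp (b - a)) (exp_pos a).le
  rw [← exp_add, sub_add_cancel] at h
  linarith

lemma rpow_sub_rpow_le {X Y γ : ℝ} (hX : 0 ≤ X) (hY : 0 < Y) (hγ0 : 0 ≤ γ) (hγ1 : γ ≤ 1) :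
    X ^ γ - Y ^ γ ≤ γ * (X - Y) * Y ^ (γ - 1) := by
  have hbern := rpow_one_add_le_one_add_mul_self (s := X / Y - 1)
    (by linarith [div_nonneg hX hY.le]) hγ0 hγ1
  rw [add_sub_cancel] at hbern
  calc X ^ γ - Y ^ γ = Y ^ γ * (X / Y) ^ γ - Y ^ γ := by
        rw [← mul_rpow hY.le (div_nonneg hX hY.le), mul_div_cancel₀ X hY.ne']
    _ ≤ Y ^ γ * (1 + γ * (X / Y - 1)) - Y ^ γ := by gcongr
    _ = γ * (X - Y) * Y ^ (γ - 1) := by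
        rw [rpow_sub hY, rpow_one]; field_simp; ring

lemma log_sub_log_le {X Y : ℝ} (hX : 0 < X) (hY : 0 < Y) : log X - log Y ≤ (X - Y) / Y := by
  rw [← log_div hX.ne' hY.ne', sub_div, div_self hY.ne']
  exact log_le_sub_one_of_pos (div_pos hX hY)

lemma exp_rpow_mul_rpow {t : ℝ} (ht : 0 < t) (γ σ : ℝ) :
    exp (t ^ γ) * t ^ σ = exp (t ^ γ + σ * log t) := by
  rw [exp_add, rpow_def_of_pos ht σ, mul_comm σ]

lemma rpow_add_log_sub_le {X Y γ σ : ℝ} (hY : 1 ≤ Y) (hYX : Y ≤ X) (hγ0 : 0 ≤ γ) (hγ1 : γ ≤ 1)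
    (hσ : 0 ≤ σ) :
    (X ^ γ + σ * log X) - (Y ^ γ + σ * log Y) ≤ (γ + σ) * ((X - Y) / Y ^ (1 - γ)) := by
  have hY0 : 0 < Y := by linarith
  have hpow : γ * (X - Y) * Y ^ (γ - 1) = γ * ((X - Y) / Y ^ (1 - γ)) := by
    rw [div_eq_mul_inv, ← rpow_neg hY0.le, neg_sub]; ring
  have hlog : log X - log Y ≤ (X - Y) / Y ^ (1 - γ) :=
    (log_sub_log_le (by linarith) hY0).trans <|
      div_le_div_of_nonneg_left (by linarith) (by positivity)
        (rpow_le_self_of_one_le hY (by linarith))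
  linarith [rpow_sub_rpow_le (X := X) (by linarith) hY0 hγ0 hγ1, mul_le_mul_of_nonneg_left hlog hσ]

lemma rpow_add_rpow_le_three_mul {X Y a : ℝ} (hX0 : 0 ≤ X) (hY : 0 < Y) (hX : X ≤ 2 * Y)
    (ha0 : 0 ≤ a) (ha1 : a ≤ 1) : X ^ a + Y ^ a ≤ 3 * Y ^ a := by
  have htwo : (2 : ℝ) ^ a ≤ 2 := rpow_le_self_of_one_le (by norm_num) ha1
  have hX' : X ^ a ≤ 2 * Y ^ a :=
    calc X ^ a ≤ (2 * Y) ^ a := by gcongr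
      _ = 2 ^ a * Y ^ a := mul_rpow (by norm_num) hY.le
      _ ≤ 2 * Y ^ a := by gcongr
  linarith

lemma rpow_add_rpow_le_two_mul {X Y a : ℝ} (hX : 1 ≤ X) (hY : 0 ≤ Y) (hYX : Y ≤ X)
    (ha0 : 0 ≤ a) (ha1 : a ≤ 1) : X ^ a + Y ^ a ≤ 2 * X := by
  have hXa : X ^ a ≤ X := rpow_le_self_of_one_le hX ha1
  have hYa : Y ^ a ≤ X ^ a := by gcongr
  linarith

lemma exp_rpow_mul_rpow_sub_le {X Y γ σ : ℝ} (hY : 1 ≤ Y) (hYX : Y ≤ X) (hγ0 : 0 ≤ γ)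
    (hγ1 : γ ≤ 1) (hσ : 0 ≤ σ) :
    exp (X ^ γ) * X ^ σ - exp (Y ^ γ) * Y ^ σ ≤
      (4 + 3 * (γ + σ)) * ((X - Y) / (X ^ (1 - γ) + Y ^ (1 - γ))) * (exp (X ^ γ) * X ^ σ) := by
  have hY0 : 0 < Y := by linarith
  have hX0 : 0 < X := by linarith
  set D := X ^ (1 - γ) + Y ^ (1 - γ)
  have hD : 0 < D := by positivity
  have hu : 0 ≤ (X - Y) / D := div_nonneg (by linarith) hD.le
  rcases le_or_gt X (2 * Y) with hclose | hfar
  · have hDY : D ≤ 3 * Y ^ (1 - γ) :=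
      rpow_add_rpow_le_three_mul hX0.le hY0 hclose (by linarith) (by linarith)
    have hquot : (X - Y) / Y ^ (1 - γ) ≤ 3 * ((X - Y) / D) := by
      rw [mul_div_assoc', div_le_div_iff₀ (by positivity) hD]
      nlinarith
    rw [exp_rpow_mul_rpow hX0, exp_rpow_mul_rpow hY0]
    refine (exp_sub_exp_le_mul_exp _ _).trans (mul_le_mul_of_nonneg_right ?_ (exp_pos _).le)
    calc _ ≤ (γ + σ) * ((X - Y) / Y ^ (1 - γ)) := rpow_add_log_sub_le hY hYX hγ0 hγ1 hσ
      _ ≤ (γ + σ) * (3 * ((X - Y) / D)) := by gcongr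
      _ ≤ (4 + 3 * (γ + σ)) * ((X - Y) / D) := by nlinarith
  · have hDX : D ≤ 2 * X :=
      rpow_add_rpow_le_two_mul (by linarith) hY0.le hYX (by linarith) (by linarith)
    have hquot : 1 ≤ 4 * ((X - Y) / D) := by
      rw [mul_div_assoc', le_div_iff₀ hD]; linarith
    calc _ ≤ exp (X ^ γ) * X ^ σ := by linarith [show 0 < exp (Y ^ γ) * Y ^ σ by positivity]
      _ ≤ (4 + 3 * (γ + σ)) * ((X - Y) / D) * (exp (X ^ γ) * X ^ σ) := by
        refine le_mul_of_one_le_left (by positivity) (hquot.trans ?_)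
        nlinarith

theorem gevrey_weight_difference (γ σ : ℝ) (hγ0 : 0 < γ) (hγ1 : γ ≤ 1) (hσ : 0 ≤ σ) :
    ∃ C > 0, ∀ x y : ℝ, 0 ≤ y → y ≤ x →
      Real.exp (jb x ^ γ) * jb x ^ σ - Real.exp (jb y ^ γ) * jb y ^ σ ≤
        C * ((x - y) / (jb x ^ (1 - γ) + jb y ^ (1 - γ))) *
          (Real.exp (jb x ^ γ) * jb x ^ σ) := by
  refine ⟨4 + 3 * (γ + σ), by positivity, fun x y hy hyx => ?_⟩
  refine (exp_rpow_mul_rpow_sub_le (one_le_jb y) (jb_le_jb hy hyx) hγ0.le hγ1 hσ).trans ?_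
  have hC : 0 ≤ 4 + 3 * (γ + σ) := by linarith
  have hx : 0 < jb x := by linarith [one_le_jb x]
  have hy' : 0 < jb y := by linarith [one_le_jb y]
  gcongr _ * (?_ / _) * _
  exact jb_sub_jb_le hy hyx
end

section
/- Let θ₁ > 0, γ ∈ (0,1], and z ∈ [0, θ₁/2]. Then for every nonzero integer k and all 0 ≤ s ≤ t, one has e^{z⟨k,kt⟩^γ} · e^{−(θ₁/2)|k|(t−s)} ≤ e^{z⟨k,ks⟩^γ}, where ⟨k,kt⟩ = sqrt(1+k²+k²t²). -/
/-- Japanese bracket ⟨k, η⟩ = sqrt(1 + k² + η²). -/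
noncomputable def jbk (k η : ℝ) : ℝ := Real.sqrt (1 + k ^ 2 + η ^ 2)

theorem gevrey_weight_decay (θ₁ γ z : ℝ) (hθ₁ : 0 < θ₁) (hγ0 : 0 < γ) (hγ1 : γ ≤ 1)
    (hz0 : 0 ≤ z) (hz : z ≤ θ₁ / 2) (k : ℤ) (hk : k ≠ 0) (s t : ℝ) (hs : 0 ≤ s) (hst : s ≤ t) :
    Real.exp (z * jbk (k : ℝ) ((k : ℝ) * t) ^ γ) * Real.exp (-(θ₁ / 2) * |(k : ℝ)| * (t - s)) ≤
      Real.exp (z * jbk (k : ℝ) ((k : ℝ) * s) ^ γ) := by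
  set A := jbk (k : ℝ) ((k : ℝ) * t) with hAdef
  set B := jbk (k : ℝ) ((k : ℝ) * s) with hBdef
  have ht : 0 ≤ t := hs.trans hst
  have hB1 : 1 ≤ B := by
    rw [hBdef, jbk, Real.one_le_sqrt]
    nlinarith [sq_nonneg ((k:ℝ)), sq_nonneg ((k:ℝ)*s)]
  have hA1 : 1 ≤ A := by
    rw [hAdef, jbk, Real.one_le_sqrt]
    nlinarith [sq_nonneg ((k:ℝ)), sq_nonneg ((k:ℝ)*t)]
  have hB0 : 0 < B := lt_of_lt_of_le one_pos hB1
  have hBA : B ≤ A := by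
    rw [hAdef, hBdef, jbk, jbk]
    apply Real.sqrt_le_sqrt
    nlinarith [mul_self_nonneg ((k:ℝ)), mul_le_mul_of_nonneg_left hst hs,
      mul_le_mul_of_nonneg_left hst ht]
  have hB2 : B ^ 2 = 1 + (k:ℝ) ^ 2 + ((k:ℝ) * s) ^ 2 := by
    rw [hBdef, jbk, Real.sq_sqrt (by positivity)]
  have hBks : |(k:ℝ)| * s ≤ B := by
    have h := Real.sqrt_le_sqrt (show ((k:ℝ)*s)^2 ≤ 1 + (k:ℝ)^2 + ((k:ℝ)*s)^2 by nlinarith [sq_nonneg ((k:ℝ))])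
    rw [Real.sqrt_sq_eq_abs, abs_mul, abs_of_nonneg hs] at h
    exact h
  have hd : A - B ≤ |(k:ℝ)| * (t - s) := by
    have hAle : A ≤ B + |(k:ℝ)| * (t - s) := by
      have h1 : 1 + (k:ℝ) ^ 2 + ((k:ℝ) * t) ^ 2 ≤ (B + |(k:ℝ)| * (t - s)) ^ 2 := by
        have hdd : (|(k:ℝ)| * (t - s)) ^ 2 = (k:ℝ) ^ 2 * (t - s) ^ 2 := by
          rw [mul_pow, sq_abs]
        have key : (k:ℝ) ^ 2 * (s * (t - s)) ≤ B * |(k:ℝ)| * (t - s) := by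
          have h := mul_le_mul_of_nonneg_right hBks
            (mul_nonneg (abs_nonneg (k:ℝ)) (sub_nonneg.mpr hst))
          calc (k:ℝ) ^ 2 * (s * (t - s)) = (|(k:ℝ)| * s) * (|(k:ℝ)| * (t - s)) := by
                rw [← sq_abs]; ring
            _ ≤ B * (|(k:ℝ)| * (t - s)) := h
            _ = B * |(k:ℝ)| * (t - s) := by ring
        nlinarith [key, hdd, hB2]
      calc A = Real.sqrt (1 + (k:ℝ) ^ 2 + ((k:ℝ) * t) ^ 2) := rfl
        _ ≤ Real.sqrt ((B + |(k:ℝ)| * (t - s)) ^ 2) := Real.sqrt_le_sqrt h1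
        _ = B + |(k:ℝ)| * (t - s) := by
            rw [Real.sqrt_sq (by nlinarith [mul_nonneg (abs_nonneg (k:ℝ)) (sub_nonneg.mpr hst)])]
    linarith
  -- A^γ - B^γ ≤ A - B
  have hpow : A ^ γ - B ^ γ ≤ A - B := by
    have hdiv1 : 1 ≤ A / B := (one_le_div hB0).mpr hBA
    have h2 : (A / B) ^ γ ≤ A / B := by
      have := Real.rpow_le_rpow_of_exponent_le hdiv1 hγ1
      simpa using this
    have h3 : B ^ γ ≤ B := by
      have := Real.rpow_le_rpow_of_exponent_le hB1 hγ1
      simpa using this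
    have h1 : A ^ γ = B ^ γ * (A / B) ^ γ := by
      rw [← Real.mul_rpow hB0.le (by positivity), mul_div_cancel₀ _ hB0.ne']
    have hPnn : 0 ≤ B ^ γ := Real.rpow_nonneg hB0.le γ
    have hBc : B * (A / B) = A := mul_div_cancel₀ _ hB0.ne'
    have h4 : A ^ γ ≤ B ^ γ * (A / B) :=
      h1 ▸ mul_le_mul_of_nonneg_left h2 hPnn
    nlinarith [mul_le_mul_of_nonneg_left h2 hPnn,
      mul_nonneg (sub_nonneg.mpr hdiv1) (sub_nonneg.mpr h3)]
  rw [← Real.exp_add, Real.exp_le_exp]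
  nlinarith [mul_le_mul_of_nonneg_left hpow hz0,
    mul_le_mul_of_nonneg_left hd (by linarith : (0:ℝ) ≤ θ₁ / 2),
    mul_nonneg (by linarith : (0:ℝ) ≤ θ₁ / 2 - z) (sub_nonneg.mpr hBA)]
end
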